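/- Let S(k,n,∞) be the subgroup of S̄∞ generated by the transposition (k, n+1) and the subgroup S(n,∞). Then the product O_k P_n is the orthogonal projection onto the subspace {η ∈ H : K(s)η = η for all s ∈ S(k,n,∞)}. -/

import Mathlib

/-!
A vector is fixed by the weak limit of a sequence of unitaries exactly when the unitaries
converge to it strongly, so `O_k P_n η = η` means `K(σ_m^n) η → η` and `K((k,N)) η → η`.

The first condition is equivalent to invariance under `S(n,∞)`. Given `s ∈ S(n,∞)` and `ε`,
continuity yields `k` with `S(k,∞)` moving `η` by less than `ε`; modulo `S(k,∞)`, `s` is a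
permutation `c` supported in a finite interval `[n, M)`, and for large `m` the conjugate
`σ_m^n c (σ_m^n)⁻¹` lies in `S(n+m,∞) ⊆ S(k,∞)` because `σ_m^n` carries `[n+m, n+2m)` onto
`[n, n+m)`. Hence `K(s)` moves `η` by less than `4ε`.

Once `η` is `S(n,∞)`-invariant, conjugation by `(n,N) ∈ S(n,∞)` exchanges `(k,N)` and `(k,n)`,
so `K((k,N)) η → η` holds exactly when `(k,n)` fixes `η`.
-/
open MeasureTheory Filter Topology
open scoped InnerProductSpace

/-- The pointwise stabilizer `S(n,∞)` of the first `n` natural numbers inside the full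
symmetric group of `ℕ` (all bijections of `ℕ`). -/
def stabSet (n : ℕ) : Set (Equiv.Perm ℕ) := {s | ∀ i < n, s i = i}

/-- `σ_m^n`, the product of the disjoint transpositions `(n+j, n+m+j)` for `j = 0,…,m-1`. -/
def sigmaPerm (n m : ℕ) : Equiv.Perm ℕ :=
  ((List.range m).map fun j => Equiv.swap (n + j) (n + m + j)).prod

section Permutations

open Equiv

lemma Equiv.Perm.list_prod_apply_eq_self {α : Type*} {l : List (Perm α)} {x : α}
    (h : ∀ p ∈ l, p x = x) : l.prod x = x := by
  induction l with
  | nil => rfl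
  | cons a t ih =>
    rw [List.prod_cons, Perm.mul_apply, ih fun p hp => h p (List.mem_cons_of_mem a hp),
      h a List.mem_cons_self]

lemma sigmaPerm_mem_stabSet (n m : ℕ) : sigmaPerm n m ∈ stabSet n := fun i hi =>
  Perm.list_prod_apply_eq_self fun p hp => by
    obtain ⟨j, -, rfl⟩ := List.mem_map.mp hp
    exact swap_apply_of_ne_of_ne (by omega) (by omega)

lemma sigmaPerm_apply_add {n m j : ℕ} (hj : j < m) : sigmaPerm n m (n + m + j) = n + j := by
  obtain ⟨s, t, hst⟩ := List.append_of_mem (List.mem_range.mpr hj)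
  have hnodup := List.nodup_middle.mp (hst ▸ List.nodup_range)
  have hlt : ∀ j' ∈ s ++ t, j' < m := fun j' hj' =>
    List.mem_range.mp (hst ▸ List.mem_append.mpr ((List.mem_append.mp hj').imp id
      (List.mem_cons_of_mem j)))
  have hfix : ∀ x, (x = n + j ∨ x = n + m + j) → ∀ j' ∈ s ++ t,
      swap (n + j') (n + m + j') x = x := by
    intro x hx j' hj'
    have : j' ≠ j := fun h => (List.nodup_cons.mp hnodup).1 (h ▸ hj')
    have := hlt j' hj'
    exact swap_apply_of_ne_of_ne (by omega) (by omega)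
  rw [sigmaPerm, hst, List.map_append, List.map_cons, List.prod_append, List.prod_cons,
    Perm.mul_apply, Perm.mul_apply, Perm.list_prod_apply_eq_self (x := n + m + j),
    swap_apply_right, Perm.list_prod_apply_eq_self]
  · exact List.forall_mem_map.mpr fun j' hj' => hfix _ (.inl rfl) j' (List.mem_append_left t hj')
  · exact List.forall_mem_map.mpr fun j' hj' => hfix _ (.inr rfl) j' (List.mem_append_right s hj')

lemma sigmaPerm_mul_mul_inv_mem_stabSet {n m M : ℕ} {c : Perm ℕ}
    (hc : ∀ i ∉ Set.Ico n M, c i = i) (hM : M ≤ n + m) :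
    sigmaPerm n m * c * (sigmaPerm n m)⁻¹ ∈ stabSet (n + m) := by
  intro i hi
  have hσ := sigmaPerm_mem_stabSet n m
  simp only [Perm.mul_apply]
  by_cases hin : i < n
  · rw [Perm.inv_eq_iff_eq.mpr (hσ i hin).symm, hc i (by simp [hin]), hσ i hin]
  · have hσi : sigmaPerm n m (n + m + (i - n)) = i := by
      rw [sigmaPerm_apply_add (by omega)]; omega
    rw [Perm.inv_eq_iff_eq.mpr hσi.symm, hc _ (by simp; omega), hσi]

lemma exists_eq_mul_of_mem_stabSet {n : ℕ} {v : Perm ℕ} (hv : v ∈ stabSet n) (t : ℕ) :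
    ∃ (M : ℕ) (c : Perm ℕ), (∀ i ∉ Set.Ico n M, c i = i) ∧ ∃ w ∈ stabSet (n + t), v = c * w := by
  induction t with
  | zero => exact ⟨0, 1, fun _ _ => rfl, v, hv, (one_mul v).symm⟩
  | succ t ih =>
    obtain ⟨M, c, hc, w, hw, rfl⟩ := ih
    set y := w (n + t)
    have hy : n + t ≤ y := by
      by_contra! hy
      have : w y = w (n + t) := hw y hy
      exact absurd (w.injective this) (by omega)
    refine ⟨max M (y + 1), c * swap (n + t) y, fun i hi => ?_, swap (n + t) y * w, fun i hi => ?_,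
      by rw [mul_assoc, swap_mul_self_mul]⟩
    · simp only [Set.mem_Ico, not_and_or, not_le, not_lt, max_le_iff] at hi
      rw [Perm.mul_apply, swap_apply_of_ne_of_ne (by omega) (by omega), hc i (by simp; omega)]
    · rw [Perm.mul_apply]
      rcases Nat.lt_or_ge i (n + t) with h | h
      · rw [hw i h, swap_apply_of_ne_of_ne (by omega) (by omega)]
      · rw [show i = n + t by omega, swap_apply_right]

end Permutations

section FixSubgroup

variable {G R E : Type*} [Group G] [Semiring R] [AddCommMonoid E] [TopologicalSpace E]
  [Module R E]

def fixSubgroup (K : G →* (E →L[R] E)) (x : E) : Subgroup G where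
  carrier := {g | K g x = x}
  mul_mem' {a b} (ha : K a x = x) (hb : K b x = x) := by
    rw [Set.mem_ofPred_eq, map_mul, mul_apply_eq_comp, hb, ha]
  one_mem' := by simp
  inv_mem' {a} (ha : K a x = x) := by
    rw [Set.mem_ofPred_eq]
    conv_lhs => rw [← ha]
    rw [← mul_apply_eq_comp, ← map_mul, inv_mul_cancel, map_one, one_apply_eq_self]

@[simp]
lemma mem_fixSubgroup {K : G →* (E →L[R] E)} {x : E} {g : G} : g ∈ fixSubgroup K x ↔ K g x = x :=
  Iff.rfl

end FixSubgroup

section Isometric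

variable {G R E : Type*} [Group G] [Semiring R] [SeminormedAddCommGroup E] [Module R E]
  {K : G →* (E →L[R] E)} (hK : ∀ g x, ‖K g x‖ = ‖x‖)
include hK

lemma norm_map_mul_apply_sub_le (a b : G) (x : E) :
    ‖K (a * b) x - x‖ ≤ ‖K a x - x‖ + ‖K b x - x‖ :=
  calc ‖K (a * b) x - x‖ = ‖K a (K b x - x) + (K a x - x)‖ := by
        rw [map_mul, mul_apply_eq_comp, map_sub, sub_add_sub_cancel]
    _ ≤ ‖K a (K b x - x)‖ + ‖K a x - x‖ := norm_add_le _ _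
    _ = ‖K a x - x‖ + ‖K b x - x‖ := by rw [hK, add_comm]

lemma norm_map_inv_apply_sub (a : G) (x : E) : ‖K a⁻¹ x - x‖ = ‖K a x - x‖ := by
  rw [← hK a, map_sub, ← mul_apply_eq_comp, ← map_mul, mul_inv_cancel, map_one,
    one_apply_eq_self, norm_sub_rev]

end Isometric

section Stabilizers

open Equiv

variable {R E : Type*} [Semiring R] [NormedAddCommGroup E] [Module R E]
  {K : Perm ℕ →* (E →L[R] E)} (hK : ∀ g x, ‖K g x‖ = ‖x‖)
include hK

lemma stabSet_subset_fixSubgroup_of_tendsto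
    (hcont : ∀ (η : E) (ε : ℝ), 0 < ε → ∃ k : ℕ, ∀ s ∈ stabSet k, ‖K s η - η‖ < ε)
    {n : ℕ} {η : E} (hσ : Tendsto (fun m => K (sigmaPerm n m) η) atTop (𝓝 η)) :
    stabSet n ⊆ fixSubgroup K η := by
  intro s hs
  refine eq_of_forall_dist_le fun ε hε => ?_
  obtain ⟨k, hk⟩ := hcont η (ε / 4) (by positivity)
  obtain ⟨M, c, hc, w, hw, rfl⟩ := exists_eq_mul_of_mem_stabSet hs k
  have hσ' := (tendsto_iff_norm_sub_tendsto_zero.mp hσ).eventually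
    (gt_mem_nhds (by positivity : (0 : ℝ) < ε / 4))
  obtain ⟨m, hmM, hσm⟩ := ((eventually_ge_atTop (max M k)).and hσ').exists
  set σ := sigmaPerm n m
  have hg : ‖K (σ * c * σ⁻¹) η - η‖ < ε / 4 :=
    hk _ fun i hi => sigmaPerm_mul_mul_inv_mem_stabSet hc (by omega) i (by omega)
  have hw' : ‖K w η - η‖ < ε / 4 := hk w fun i hi => hw i (by omega)
  rw [dist_eq_norm, show c * w = σ⁻¹ * (σ * c * σ⁻¹) * σ * w by group]
  grw [norm_map_mul_apply_sub_le hK, norm_map_mul_apply_sub_le hK, norm_map_mul_apply_sub_le hK,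
    norm_map_inv_apply_sub hK]
  linarith

lemma tendsto_swap_apply_iff_mem_fixSubgroup {n k : ℕ} {η : E}
    (hη : stabSet n ⊆ fixSubgroup K η) :
    Tendsto (fun N => K (swap k N) η) atTop (𝓝 η) ↔ swap k n ∈ fixSubgroup K η := by
  have hswap : ∀ N, n < N → swap n N ∈ fixSubgroup K η := fun N hN =>
    hη fun i hi => swap_apply_of_ne_of_ne (by omega) (by omega)
  rcases eq_or_ne k n with rfl | hkn
  · simp only [swap_self, Perm.one_def.symm, one_mem, iff_true]
    exact tendsto_const_nhds.congr' <| (eventually_gt_atTop k).mono fun N hN => (hswap N hN).symm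
  have hconj : ∀ N, k ≠ N → swap n N * swap k N * swap n N = swap k n ∧
      swap n N * swap k n * swap n N = swap k N := fun N hkN =>
    ⟨by rw [swap_comm n N, swap_mul_swap_mul_swap hkN hkn, swap_comm],
     by rw [swap_mul_swap_mul_swap hkn hkN, swap_comm]⟩
  constructor
  · intro h
    rw [mem_fixSubgroup, ← sub_eq_zero, ← norm_le_zero_iff]
    refine ge_of_tendsto (tendsto_iff_norm_sub_tendsto_zero.mp h) ?_
    filter_upwards [eventually_gt_atTop (max k n)] with N hN
    rw [← (hconj N (by omega)).1]
    grw [norm_map_mul_apply_sub_le hK, norm_map_mul_apply_sub_le hK]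
    rw [mem_fixSubgroup.mp (hswap N (by omega)), sub_self, norm_zero, zero_add, add_zero]
  · intro h
    refine tendsto_const_nhds.congr' <| (eventually_gt_atTop (max k n)).mono fun N hN => ?_
    change η = K (swap k N) η
    rw [← (hconj N (by omega)).2]
    exact (mul_mem (mul_mem (hswap N (by omega)) h) (hswap N (by omega))).symm

end Stabilizers

section Hilbert

variable {𝕜 H : Type*} [RCLike 𝕜] [NormedAddCommGroup H] [InnerProductSpace 𝕜 H]

lemma eq_iff_tendsto_of_tendsto_inner {ι : Type*} {l : Filter ι} [l.NeBot] {u : ι → H}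
    {ξ η : H} (hu : ∀ i, ‖u i‖ = ‖η‖)
    (hweak : ∀ y, Tendsto (fun i => ⟪u i, y⟫_𝕜) l (𝓝 ⟪ξ, y⟫_𝕜)) :
    ξ = η ↔ Tendsto u l (𝓝 η) := by
  refine ⟨?_, fun h => ext_inner_right 𝕜 fun y => tendsto_nhds_unique (hweak y)
    (h.inner tendsto_const_nhds)⟩
  rintro rfl
  have hsq : Tendsto (fun i => ‖u i - ξ‖ ^ 2) l (𝓝 0) := by
    have hre := ((RCLike.continuous_re.tendsto _).comp (hweak ξ)).const_mul 2 |>.const_sub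
      (2 * ‖ξ‖ ^ 2)
    rw [Function.comp_def, inner_self_eq_norm_sq, sub_self] at hre
    refine hre.congr fun i => ?_
    rw [@norm_sub_sq 𝕜, hu]
    ring
  rw [tendsto_iff_norm_sub_tendsto_zero]
  simpa [Real.sqrt_sq (norm_nonneg _)] using hsq.sqrt

lemma apply_eq_self_iff_stabSet_subset {K : Equiv.Perm ℕ →* (H →L[𝕜] H)}
    (hK : ∀ g x, ‖K g x‖ = ‖x‖)
    (hcont : ∀ (η : H) (ε : ℝ), 0 < ε → ∃ k : ℕ, ∀ s ∈ stabSet k, ‖K s η - η‖ < ε)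
    {n : ℕ} {P : H →L[𝕜] H}
    (hP : ∀ η ζ : H, Tendsto (fun m => ⟪K (sigmaPerm n m) η, ζ⟫_𝕜) atTop (𝓝 ⟪P η, ζ⟫_𝕜))
    (η : H) : P η = η ↔ stabSet n ⊆ fixSubgroup K η := by
  rw [eq_iff_tendsto_of_tendsto_inner (fun m => hK _ η) (hP η)]
  exact ⟨stabSet_subset_fixSubgroup_of_tendsto hK hcont, fun h =>
    tendsto_const_nhds.congr fun m => (h (sigmaPerm_mem_stabSet n m)).symm⟩

end Hilbert

lemma ContinuousLinearMap.mem_range_comp_iff_of_commute {R M : Type*} [Semiring R]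
    [TopologicalSpace M] [AddCommMonoid M] [Module R M] {O P : M →L[R] M}
    (hO : IsIdempotentElem O) (hP : IsIdempotentElem P) (hOP : Commute O P) (η : M) :
    η ∈ Set.range (O.comp P) ↔ O η = η ∧ P η = η := by
  constructor
  · rintro ⟨ξ, rfl⟩
    refine ⟨DFunLike.congr_fun hO (P ξ), ?_⟩
    change (P * O) (P ξ) = O (P ξ)
    rw [← hOP.eq, mul_apply_eq_comp, ← mul_apply_eq_comp P, hP.eq]
  · rintro ⟨hOη, hPη⟩
    exact ⟨η, by rw [comp_apply, hPη, hOη]⟩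

/-- `O_k · P_n` is the orthogonal projection onto the subspace of vectors
fixed by `K(s)` for all `s` in the subgroup `S(k,n,∞)` generated by the transposition
`(k, n+1)` (in 0-based indexing, `Equiv.swap k n`) and the stabilizer `S(n,∞)`. -/
theorem statement7
    {H : Type*} [NormedAddCommGroup H] [InnerProductSpace ℂ H] [CompleteSpace H]
    (K : Equiv.Perm ℕ →* (H →L[ℂ] H))
    (hunit : ∀ g (η : H), ‖K g η‖ = ‖η‖)
    (hcont : ∀ (η : H) (ε : ℝ), 0 < ε → ∃ k : ℕ, ∀ s ∈ stabSet k, ‖K s η - η‖ < ε)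
    (n k : ℕ) (P O : H →L[ℂ] H)
    (hP : ∀ η ζ : H, Tendsto (fun m => ⟪K (sigmaPerm n m) η, ζ⟫_ℂ) atTop (𝓝 ⟪P η, ζ⟫_ℂ))
    (hO : ∀ η ζ : H, Tendsto (fun N => ⟪K (Equiv.swap k N) η, ζ⟫_ℂ) atTop (𝓝 ⟪O η, ζ⟫_ℂ))
    (hPsa : IsSelfAdjoint P) (hPidem : P.comp P = P)
    (hOsa : IsSelfAdjoint O) (hOidem : O.comp O = O)
    (hcomm : P.comp O = O.comp P) :
    IsSelfAdjoint (O.comp P) ∧ (O.comp P).comp (O.comp P) = O.comp P ∧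
      Set.range (O.comp P) =
        {η : H | ∀ s ∈ Subgroup.closure ({Equiv.swap k n} ∪ stabSet n), K s η = η} := by
  have hOP : Commute O P := hcomm.symm
  refine ⟨(hOsa.commute_iff hPsa).mp hOP, IsIdempotentElem.mul_of_commute hOP hOidem hPidem, ?_⟩
  ext η
  change _ ↔ Subgroup.closure _ ≤ fixSubgroup K η
  rw [ContinuousLinearMap.mem_range_comp_iff_of_commute hOidem hPidem hOP, Subgroup.closure_le,
    Set.union_subset_iff, Set.singleton_subset_iff, apply_eq_self_iff_stabSet_subset hunit hcont hP,
    eq_iff_tendsto_of_tendsto_inner (fun N => hunit _ η) (hO η)]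
  exact and_congr_left (tendsto_swap_apply_iff_mem_fixSubgroup hunit)
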